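/- There is a universal constant C > 0 with the following property. Let X be a compact metric space and let 𝓕 be a Banach space that is a linear subspace of C(X), is compactly embedded in C(X) (its unit ball U_𝓕 is compact in the sup-norm metric), and is dense in C(X) in the sup norm. There exists a prediction strategy producing predictions μₙ with |μₙ| ≤ 1 that guarantees, for every sequence of signals x₁, x₂, … ∈ X and observations y₁, y₂, … ∈ [−1, 1], for all N = 1, 2, … and all continuous F : X → ℝ: Σ_{n=1}^N (yₙ − μₙ)² ≤ Σ_{n=1}^N (yₙ − F(xₙ))² + C · inf_{ε∈(0,1/2]} ( H_{ε/A(ε)}(U_𝓕) + log₂ log₂ (1/ε) + log₂ log₂ A(ε) + εN + 1 ), where A(ε) := 2 max(1, 𝓐_ε^𝓕(F)), 𝓐_ε^𝓕(F) := inf{ ‖F*‖_𝓕 : F* ∈ 𝓕, ‖F − F*‖_{C(X)} ≤ ε } is the approachability of F by 𝓕, and H_δ(U_𝓕) is the metric entropy of U_𝓕 in the sup-norm metric. -/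

import Mathlib

open scoped BigOperators

universe u v

/-- Given a prediction strategy `σ` and sequences of signals `x` and observations `y`,
`preds σ x y n` is the prediction output on round `n`. -/
noncomputable def preds {X P : Type*} (σ : List (X × P) → X → P)
    (x : ℕ → X) (y : ℕ → P) (n : ℕ) : P :=
  σ ((List.range n).map fun i => (x i, y i)) (x n)

/-- The minimal number of points of `A` forming an `ε`-net for `A`. -/
noncomputable def coveringNumber {E : Type*} [MetricSpace E] (A : Set E) (ε : ℝ) : ℕ :=
  sInf {n : ℕ | ∃ S : Finset E, ↑S ⊆ A ∧ S.card = n ∧ ∀ a ∈ A, ∃ b ∈ S, dist a b ≤ ε}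

/-- Metric entropy: binary logarithm of the minimal size of an `ε`-net. -/
noncomputable def metricEntropy {E : Type*} [MetricSpace E] (A : Set E) (ε : ℝ) : ℝ :=
  Real.logb 2 (coveringNumber A ε)

/-- Approachability `𝓐_ε^𝓕(F)` of `F` by the subspace `𝓕` (embedded via `ι`). -/
noncomputable def approach {𝕜 𝓕 E : Type*} [NormedField 𝕜]
    [NormedAddCommGroup 𝓕] [NormedAddCommGroup E] [Module 𝕜 𝓕] [Module 𝕜 E]
    (ι : 𝓕 →ₗ[𝕜] E) (F : E) (ε : ℝ) : ℝ :=
  sInf ((fun g : 𝓕 => ‖g‖) '' {g : 𝓕 | ‖F - ι g‖ ≤ ε})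


set_option maxHeartbeats 1000000

namespace Stmt4Aux

noncomputable def clip (t : ℝ) : ℝ := max (-1) (min 1 t)

lemma neg_one_le_clip (t : ℝ) : -1 ≤ clip t := le_max_left _ _

lemma clip_le_one (t : ℝ) : clip t ≤ 1 :=
  max_le (by norm_num) (min_le_left _ _)

lemma abs_clip_le (t : ℝ) : |clip t| ≤ 1 :=
  abs_le.2 ⟨neg_one_le_clip t, clip_le_one t⟩

lemma abs_min_sub (a b : ℝ) : |min 1 a - min 1 b| ≤ |a - b| := by
  rcases le_total a 1 with h1 | h1 <;> rcases le_total b 1 with h2 | h2 <;>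
    simp [min_eq_left, min_eq_right, h1, h2, abs_le] <;>
    cases abs_cases (a - b) <;> constructor <;> linarith [abs_nonneg (a - b)]

lemma abs_max_sub (a b : ℝ) : |max (-1) a - max (-1) b| ≤ |a - b| := by
  rcases le_total a (-1) with h1 | h1 <;> rcases le_total b (-1) with h2 | h2 <;>
    simp [max_eq_left, max_eq_right, h1, h2, abs_le] <;>
    cases abs_cases (a - b) <;> constructor <;> linarith [abs_nonneg (a - b)]

lemma clip_lipschitz (s t : ℝ) : |clip t - clip s| ≤ |t - s| :=
  le_trans (abs_max_sub _ _) (abs_min_sub _ _)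

/-- Clipping can only help: if `y ∈ [-1,1]` and `|t - s| ≤ d` then
`(y - clip t)^2 ≤ (y - s)^2 + 4 d`. -/
lemma sq_clip_le {y : ℝ} (hy : |y| ≤ 1) {s t d : ℝ} (h : |t - s| ≤ d) :
    (y - clip t) ^ 2 ≤ (y - s) ^ 2 + 4 * d := by
  have h1 : (y - clip s) ^ 2 ≤ (y - s) ^ 2 := by
    unfold clip
    rw [abs_le] at hy
    rcases le_total 1 s with h2 | h2
    · rw [min_eq_left h2, max_eq_right (by norm_num : (-1:ℝ) ≤ 1)]
      nlinarith
    · rw [min_eq_right h2]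
      rcases le_total s (-1) with h3 | h3
      · rw [max_eq_left h3]; nlinarith
      · rw [max_eq_right h3]
  have h2 : |clip t - clip s| ≤ d := le_trans (clip_lipschitz s t) h
  have h3 : (y - clip t) ^ 2 ≤ (y - clip s) ^ 2 + 4 * d := by
    have ha := abs_clip_le t
    have hb := abs_clip_le s
    rw [abs_le] at ha hb hy h2
    nlinarith
  linarith

/-- The tangent-line inequality expressing exp-concavity of the square loss
with learning rate `1/24`. -/
lemma tangent_core {a c : ℝ} (ha : |a| ≤ 2) (hc : |c| ≤ 2) :
    Real.exp ((a ^ 2 - (a - c) ^ 2) / 24) ≤ 1 + a * c / 12 := by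
  rw [abs_le] at ha hc
  set s := (a ^ 2 - (a - c) ^ 2) / 24 with hs
  have hs4 : s ≤ 1 / 6 := by
    have h0 : a ^ 2 - (a - c) ^ 2 ≤ a ^ 2 := by nlinarith [sq_nonneg (a - c)]
    have h0' : a ^ 2 ≤ 4 := by nlinarith
    rw [hs]
    linarith
  have h3 : 0 < 1 - s := by linarith
  have h1 : Real.exp s ≤ 1 / (1 - s) := by
    have h2 : 1 - s ≤ Real.exp (-s) := by
      have := Real.add_one_le_exp (-s); linarith
    rw [le_div_iff₀ h3]
    calc Real.exp s * (1 - s) ≤ Real.exp s * Real.exp (-s) :=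
          mul_le_mul_of_nonneg_left h2 (Real.exp_pos _).le
      _ = 1 := by rw [← Real.exp_add]; simp
  refine le_trans h1 ?_
  rw [div_le_iff₀ h3, hs]
  have hkey : 0 ≤ c ^ 2 * (12 - 2 * a ^ 2 + a * c) := by
    have h4 : 2 * a ^ 2 ≤ 8 := by nlinarith
    have h5 : -4 ≤ a * c := by nlinarith
    nlinarith [sq_nonneg c]
  have hid : (1 + a * c / 12) * (1 - (a ^ 2 - (a - c) ^ 2) / 24) - 1
      = c ^ 2 * (12 - 2 * a ^ 2 + a * c) / 288 := by ring
  linarith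

lemma tangent {y μ ξ : ℝ} (hy : |y| ≤ 1) (hμ : |μ| ≤ 1) (hξ : |ξ| ≤ 1) :
    Real.exp (-(y - ξ) ^ 2 / 24) ≤
      Real.exp (-(y - μ) ^ 2 / 24) * (1 + (y - μ) * (ξ - μ) / 12) := by
  have ha : |y - μ| ≤ 2 := by
    rw [abs_le] at *; constructor <;> [linarith [hy.1, hμ.2]; linarith [hy.2, hμ.1]]
  have hc : |ξ - μ| ≤ 2 := by
    rw [abs_le] at *; constructor <;> [linarith [hξ.1, hμ.2]; linarith [hξ.2, hμ.1]]
  have key : Real.exp (-(y - ξ) ^ 2 / 24)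
      = Real.exp (-(y - μ) ^ 2 / 24) *
        Real.exp (((y - μ) ^ 2 - ((y - μ) - (ξ - μ)) ^ 2) / 24) := by
    rw [← Real.exp_add]; ring_nf
  rw [key]
  exact mul_le_mul_of_nonneg_left (tangent_core ha hc) (Real.exp_pos _).le



section EWA

variable {A E : Type*}

/-- Cumulative square loss of expert `e` over the history `h`. -/
noncomputable def eloss (ξ : E → A → ℝ) (e : E) (h : List (A × ℝ)) : ℝ :=
  (h.map (fun p => (p.2 - ξ e p.1) ^ 2)).sum

/-- Weight of expert `e` after history `h`. -/
noncomputable def wt (π : E → ℝ) (ξ : E → A → ℝ) (e : E) (h : List (A × ℝ)) : ℝ :=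
  π e * Real.exp (-(eloss ξ e h) / 24)

/-- Total weight. -/
noncomputable def Wt (π : E → ℝ) (ξ : E → A → ℝ) (h : List (A × ℝ)) : ℝ :=
  ∑' e, wt π ξ e h

/-- The exponential-weights prediction strategy. -/
noncomputable def strat (π : E → ℝ) (ξ : E → A → ℝ) (h : List (A × ℝ)) (a : A) : ℝ :=
  (∑' e, wt π ξ e h * ξ e a) / Wt π ξ h

variable {π : E → ℝ} {ξ : E → A → ℝ}

lemma eloss_nonneg (e : E) (h : List (A × ℝ)) : 0 ≤ eloss ξ e h := by
  apply List.sum_nonneg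
  intro x hx
  simp only [List.mem_map] at hx
  obtain ⟨p, -, rfl⟩ := hx
  positivity

lemma eloss_nil (e : E) : eloss ξ e ([] : List (A × ℝ)) = 0 := rfl

lemma eloss_append (e : E) (h : List (A × ℝ)) (a : A) (b : ℝ) :
    eloss ξ e (h ++ [(a, b)]) = eloss ξ e h + (b - ξ e a) ^ 2 := by
  unfold eloss
  rw [List.map_append, List.sum_append]
  simp

lemma wt_pos (hπ : ∀ e, 0 < π e) (e : E) (h : List (A × ℝ)) : 0 < wt π ξ e h :=
  mul_pos (hπ e) (Real.exp_pos _)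

lemma wt_le (hπ : ∀ e, 0 < π e) (e : E) (h : List (A × ℝ)) : wt π ξ e h ≤ π e := by
  have h1 : Real.exp (-(eloss ξ e h) / 24) ≤ 1 := by
    rw [Real.exp_le_one_iff]
    have := eloss_nonneg (ξ := ξ) e h
    linarith
  calc wt π ξ e h ≤ π e * 1 := mul_le_mul_of_nonneg_left h1 (hπ e).le
    _ = π e := mul_one _

lemma summable_wt (hπ : ∀ e, 0 < π e) (hπs : Summable π) (h : List (A × ℝ)) :
    Summable (fun e => wt π ξ e h) :=
  Summable.of_nonneg_of_le (fun e => (wt_pos hπ e h).le) (fun e => wt_le hπ e h) hπs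

lemma summable_wt_mul (hπ : ∀ e, 0 < π e) (hπs : Summable π)
    (hξ : ∀ e a, |ξ e a| ≤ 1) (h : List (A × ℝ)) (a : A) :
    Summable (fun e => wt π ξ e h * ξ e a) := by
  apply Summable.of_abs
  apply Summable.of_nonneg_of_le (fun e => abs_nonneg _) _ hπs
  intro e
  rw [abs_mul]
  calc |wt π ξ e h| * |ξ e a| ≤ π e * 1 := by
        apply mul_le_mul _ (hξ e a) (abs_nonneg _) (hπ e).le
        rw [abs_of_pos (wt_pos hπ e h)]
        exact wt_le hπ e h
    _ = π e := mul_one _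

lemma Wt_pos [Nonempty E] (hπ : ∀ e, 0 < π e) (hπs : Summable π) (h : List (A × ℝ)) :
    0 < Wt π ξ h := by
  obtain ⟨e⟩ := (inferInstance : Nonempty E)
  exact Summable.tsum_pos (summable_wt hπ hπs h) (fun e => (wt_pos hπ e h).le) e (wt_pos hπ e h)

lemma abs_strat_le [Nonempty E] (hπ : ∀ e, 0 < π e) (hπs : Summable π)
    (hξ : ∀ e a, |ξ e a| ≤ 1) (h : List (A × ℝ)) (a : A) :
    |strat π ξ h a| ≤ 1 := by
  have hW := Wt_pos (ξ := ξ) hπ hπs h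
  unfold strat
  rw [abs_div, abs_of_pos hW, div_le_one hW]
  have h1 : |∑' e, wt π ξ e h * ξ e a| ≤ ∑' e, |wt π ξ e h * ξ e a| := by
    have hs : Summable (fun e => ‖wt π ξ e h * ξ e a‖) := by
      simp only [Real.norm_eq_abs]
      exact (summable_wt_mul hπ hπs hξ h a).abs
    have := norm_tsum_le_tsum_norm hs
    simp only [Real.norm_eq_abs] at this
    exact this
  refine le_trans h1 ?_
  apply Summable.tsum_le_tsum _ ((summable_wt_mul hπ hπs hξ h a).abs) (summable_wt hπ hπs h)
  intro e
  rw [abs_mul, abs_of_pos (wt_pos hπ e h)]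
  calc wt π ξ e h * |ξ e a| ≤ wt π ξ e h * 1 :=
        mul_le_mul_of_nonneg_left (hξ e a) (wt_pos hπ e h).le
    _ = wt π ξ e h := mul_one _


/-- History list built from sequences. -/
def hist (x : ℕ → A) (y : ℕ → ℝ) (n : ℕ) : List (A × ℝ) :=
  (List.range n).map fun i => (x i, y i)

lemma hist_succ (x : ℕ → A) (y : ℕ → ℝ) (n : ℕ) :
    hist x y (n + 1) = hist x y n ++ [(x n, y n)] := by
  unfold hist
  rw [List.range_succ, List.map_append]
  simp

lemma eloss_hist (x : ℕ → A) (y : ℕ → ℝ) (e : E) (N : ℕ) :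
    eloss ξ e (hist x y N) = ∑ n ∈ Finset.range N, (y n - ξ e (x n)) ^ 2 := by
  induction N with
  | zero => simp [hist, eloss_nil]
  | succ n ih => rw [hist_succ, eloss_append, Finset.sum_range_succ, ih]

lemma tsum_wt_mul_eq [Nonempty E] (hπ : ∀ e, 0 < π e) (hπs : Summable π)
    (h : List (A × ℝ)) (a : A) :
    ∑' e, wt π ξ e h * ξ e a = strat π ξ h a * Wt π ξ h := by
  rw [strat, div_mul_cancel₀]
  exact (Wt_pos hπ hπs h).ne'

/-- One-step inequality for the exponential-weights strategy. -/
lemma step [Nonempty E] (hπ : ∀ e, 0 < π e) (hπs : Summable π)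
    (hξ : ∀ e a, |ξ e a| ≤ 1) {y : ℝ} (hy : |y| ≤ 1) (h : List (A × ℝ)) (a : A) :
    Wt π ξ (h ++ [(a, y)]) ≤
      Wt π ξ h * Real.exp (-(y - strat π ξ h a) ^ 2 / 24) := by
  set μ := strat π ξ h a with hμdef
  have hμ : |μ| ≤ 1 := abs_strat_le hπ hπs hξ h a
  set E1 := Real.exp (-(y - μ) ^ 2 / 24) with hE1
  have hE1pos : 0 < E1 := Real.exp_pos _
  have hterm : ∀ e, wt π ξ e (h ++ [(a, y)])
      = wt π ξ e h * Real.exp (-(y - ξ e a) ^ 2 / 24) := by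
    intro e
    rw [wt, eloss_append, wt]
    rw [neg_add, add_div, Real.exp_add]
    ring
  set c1 := E1 * (1 - (y - μ) * μ / 12) with hc1
  set c2 := E1 * ((y - μ) / 12) with hc2
  have hle : ∀ e, wt π ξ e (h ++ [(a, y)])
      ≤ c1 * wt π ξ e h + c2 * (wt π ξ e h * ξ e a) := by
    intro e
    rw [hterm e]
    have htan := tangent hy hμ (hξ e a)
    have h2 : wt π ξ e h * Real.exp (-(y - ξ e a) ^ 2 / 24)
        ≤ wt π ξ e h * (E1 * (1 + (y - μ) * (ξ e a - μ) / 12)) :=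
      mul_le_mul_of_nonneg_left htan (wt_pos hπ e h).le
    refine le_trans h2 (le_of_eq ?_)
    rw [hc1, hc2]
    ring
  have hsum1 : Summable (fun e => wt π ξ e h) := summable_wt hπ hπs h
  have hsum2 : Summable (fun e => wt π ξ e h * ξ e a) := summable_wt_mul hπ hπs hξ h a
  have hsumR : Summable (fun e => c1 * wt π ξ e h + c2 * (wt π ξ e h * ξ e a)) :=
    (hsum1.mul_left c1).add (hsum2.mul_left c2)
  have hsumL : Summable (fun e => wt π ξ e (h ++ [(a, y)])) := summable_wt hπ hπs _
  have h3 : Wt π ξ (h ++ [(a, y)]) ≤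
      ∑' e, (c1 * wt π ξ e h + c2 * (wt π ξ e h * ξ e a)) :=
    Summable.tsum_le_tsum hle hsumL hsumR
  refine le_trans h3 (le_of_eq ?_)
  rw [Summable.tsum_add (hsum1.mul_left c1) (hsum2.mul_left c2),
    Summable.tsum_mul_left c1 hsum1, Summable.tsum_mul_left c2 hsum2,
    tsum_wt_mul_eq hπ hπs h a]
  show c1 * Wt π ξ h + c2 * (μ * Wt π ξ h) = Wt π ξ h * E1
  rw [hc1, hc2]
  ring

/-- Iterated step inequality. -/
lemma W_le [Nonempty E] (hπ : ∀ e, 0 < π e) (hπs : Summable π)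
    (hξ : ∀ e a, |ξ e a| ≤ 1) (x : ℕ → A) (y : ℕ → ℝ) (hy : ∀ n, |y n| ≤ 1) (N : ℕ) :
    Wt π ξ (hist x y N) ≤ Wt π ξ [] *
      Real.exp (-(∑ n ∈ Finset.range N, (y n - strat π ξ (hist x y n) (x n)) ^ 2) / 24) := by
  induction N with
  | zero => simp [hist]
  | succ n ih =>
    rw [hist_succ]
    have h1 := step hπ hπs hξ (hy n) (hist x y n) (x n)
    have h2 : 0 ≤ Real.exp (-(y n - strat π ξ (hist x y n) (x n)) ^ 2 / 24) :=
      (Real.exp_pos _).le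
    calc Wt π ξ (hist x y n ++ [(x n, y n)])
        ≤ Wt π ξ (hist x y n) * Real.exp (-(y n - strat π ξ (hist x y n) (x n)) ^ 2 / 24) := h1
      _ ≤ (Wt π ξ [] * Real.exp (-(∑ k ∈ Finset.range n,
            (y k - strat π ξ (hist x y k) (x k)) ^ 2) / 24)) *
            Real.exp (-(y n - strat π ξ (hist x y n) (x n)) ^ 2 / 24) :=
          mul_le_mul_of_nonneg_right ih h2
      _ = Wt π ξ [] * Real.exp (-(∑ k ∈ Finset.range (n + 1),
            (y k - strat π ξ (hist x y k) (x k)) ^ 2) / 24) := by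
          rw [mul_assoc, ← Real.exp_add, Finset.sum_range_succ]
          congr 1
          rw [Real.exp_eq_exp]
          ring

/-- The regret bound of the exponential-weights strategy against each expert. -/
lemma regret_bound [Nonempty E] (hπ : ∀ e, 0 < π e) (hπs : Summable π)
    (hξ : ∀ e a, |ξ e a| ≤ 1) (x : ℕ → A) (y : ℕ → ℝ) (hy : ∀ n, |y n| ≤ 1)
    (N : ℕ) (e : E) :
    ∑ n ∈ Finset.range N, (y n - strat π ξ (hist x y n) (x n)) ^ 2 ≤
      ∑ n ∈ Finset.range N, (y n - ξ e (x n)) ^ 2 +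
        24 * Real.log (Wt π ξ ([] : List (A × ℝ)) / π e) := by
  set S := ∑ n ∈ Finset.range N, (y n - strat π ξ (hist x y n) (x n)) ^ 2 with hS
  set L := ∑ n ∈ Finset.range N, (y n - ξ e (x n)) ^ 2 with hL
  set W0 := Wt π ξ ([] : List (A × ℝ)) with hW0
  have hW0pos : 0 < W0 := Wt_pos hπ hπs []
  have h1 : π e * Real.exp (-L / 24) ≤ W0 * Real.exp (-S / 24) := by
    have h2 : wt π ξ e (hist x y N) ≤ Wt π ξ (hist x y N) :=
      Summable.le_tsum (summable_wt hπ hπs _) e (fun j _ => (wt_pos hπ j _).le)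
    have h3 := W_le hπ hπs hξ x y hy N
    have h4 : wt π ξ e (hist x y N) = π e * Real.exp (-L / 24) := by
      rw [wt, eloss_hist]
    rw [← h4]
    exact le_trans h2 h3
  have h5 : Real.exp ((S - L) / 24) ≤ W0 / π e := by
    rw [le_div_iff₀ (hπ e)]
    have e1 : Real.exp ((S - L) / 24) * π e = Real.exp (S / 24) * (π e * Real.exp (-L / 24)) := by
      rw [mul_comm (Real.exp (S / 24)) _, mul_assoc, ← Real.exp_add,
        mul_comm (Real.exp ((S - L) / 24)) (π e)]
      congr 1
      rw [Real.exp_eq_exp]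
      ring
    have e2 : Real.exp (S / 24) * (W0 * Real.exp (-S / 24)) = W0 := by
      rw [mul_comm (Real.exp (S / 24)) _, mul_assoc, ← Real.exp_add,
        show -S / 24 + S / 24 = 0 by ring, Real.exp_zero, mul_one]
    calc Real.exp ((S - L) / 24) * π e
        = Real.exp (S / 24) * (π e * Real.exp (-L / 24)) := e1
      _ ≤ Real.exp (S / 24) * (W0 * Real.exp (-S / 24)) :=
          mul_le_mul_of_nonneg_left h1 (Real.exp_pos _).le
      _ = W0 := e2
  have h9 : (S - L) / 24 ≤ Real.log (W0 / π e) := by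
    rw [Real.le_log_iff_exp_le (div_pos hW0pos (hπ e))]
    exact h5
  linarith

end EWA



/-- For a compact set, there is a minimal finite internal `ε`-net realizing the
covering number. -/
lemma exists_net {M : Type*} [MetricSpace M] {A : Set M} (hA : IsCompact A) {ε : ℝ}
    (hε : 0 < ε) :
    ∃ S : Finset M, ↑S ⊆ A ∧ S.card = coveringNumber A ε ∧
      ∀ a ∈ A, ∃ b ∈ S, dist a b ≤ ε := by
  have hne : {n : ℕ | ∃ S : Finset M, ↑S ⊆ A ∧ S.card = n ∧
      ∀ a ∈ A, ∃ b ∈ S, dist a b ≤ ε}.Nonempty := by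
    have htb : TotallyBounded A := hA.totallyBounded
    rw [totallyBounded_iff_subset] at htb
    obtain ⟨t, hsub, hfin, hcov⟩ := htb _ (Metric.dist_mem_uniformity hε)
    refine ⟨(hfin.toFinset).card, hfin.toFinset, ?_, rfl, ?_⟩
    · rw [Set.Finite.coe_toFinset]; exact hsub
    · intro a ha
      have := hcov ha
      simp only [Set.mem_iUnion] at this
      obtain ⟨b, hb, hab⟩ := this
      exact ⟨b, hfin.mem_toFinset.2 hb, le_of_lt hab⟩
  have := Nat.sInf_mem hne
  obtain ⟨S, h1, h2, h3⟩ := this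
  exact ⟨S, h1, h2, h3⟩

lemma one_le_coveringNumber {M : Type*} [MetricSpace M] {A : Set M} (hA : IsCompact A)
    (hne : A.Nonempty) {ε : ℝ} (hε : 0 < ε) : 1 ≤ coveringNumber A ε := by
  obtain ⟨S, -, hcard, hcov⟩ := exists_net hA hε
  obtain ⟨a, ha⟩ := hne
  obtain ⟨b, hb, -⟩ := hcov a ha
  rw [← hcard]
  exact Finset.card_pos.2 ⟨b, hb⟩

lemma coveringNumber_anti {M : Type*} [MetricSpace M] {A : Set M} (hA : IsCompact A)
    {ε ε' : ℝ} (hε : 0 < ε) (h : ε ≤ ε') :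
    coveringNumber A ε' ≤ coveringNumber A ε := by
  obtain ⟨S, h1, h2, h3⟩ := exists_net hA hε
  rw [← h2]
  apply Nat.sInf_le
  exact ⟨S, h1, rfl, fun a ha => by
    obtain ⟨b, hb, hab⟩ := h3 a ha
    exact ⟨b, hb, le_trans hab h⟩⟩

/-- The weights `1/(m+1)^2`. -/
noncomputable def w (m : ℕ) : ℝ := 1 / ((m : ℝ) + 1) ^ 2

lemma w_pos (m : ℕ) : 0 < w m := by
  unfold w; positivity

lemma summable_w : Summable w := by
  have h := Real.summable_one_div_nat_pow.2 (by norm_num : 1 < 2)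
  have := (summable_nat_add_iff 1).2 h
  apply this.congr
  intro m
  unfold w
  push_cast
  ring

lemma tsum_w_le : ∑' m, w m ≤ 3 := by
  have h := Real.summable_one_div_nat_pow.2 (by norm_num : 1 < 2)
  have hshift : ∑' m, (fun n : ℕ => 1 / (n : ℝ) ^ 2) (m + 1) = ∑' m, w m := by
    apply tsum_congr
    intro m
    unfold w
    push_cast
    ring
  have h0 : ∑' n : ℕ, (1 : ℝ) / (n : ℝ) ^ 2
      = 1 / ((0 : ℕ) : ℝ) ^ 2 + ∑' m, (fun n : ℕ => 1 / (n : ℝ) ^ 2) (m + 1) :=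
    Summable.tsum_eq_zero_add h
  have hval : ∑' n : ℕ, (1 : ℝ) / (n : ℝ) ^ 2 = Real.pi ^ 2 / 6 := hasSum_zeta_two.tsum_eq
  have hpi : Real.pi ^ 2 / 6 ≤ 3 := by
    nlinarith [Real.pi_le_four, Real.pi_pos]
  have : ∑' m, w m = Real.pi ^ 2 / 6 := by
    rw [← hshift]
    have hz : (1 : ℝ) / ((0 : ℕ) : ℝ) ^ 2 = 0 := by norm_num
    rw [hval, hz] at h0
    linarith
  linarith

lemma log_w_inv (m : ℕ) : Real.log (w m)⁻¹ = 2 * Real.log ((m : ℝ) + 1) := by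
  unfold w
  rw [one_div, inv_inv, Real.log_pow]
  push_cast
  ring



lemma jbound {j P Q : ℝ} (hj : j ≤ Q + P) (hP : 1 ≤ P) (hQ : 1 ≤ Q) :
    j + 1 ≤ 3 * P * Q := by
  nlinarith [mul_nonneg (sub_nonneg.2 hP) (sub_nonneg.2 hQ)]

lemma assemble {Sm SF tξ lW lj lk lC H L1 L2 eN : ℝ}
    (hreg : Sm ≤ tξ + 24 * (lW + 2 * lk + 2 * lj + lC))
    (hsum : tξ ≤ SF + 20 * eN)
    (hlW : lW ≤ 8) (hlj : lj ≤ 2 + L1 + L2) (hlk : lk ≤ 2 + L2)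
    (hlC : lC ≤ H) (hH : 0 ≤ H) (hL1 : 0 ≤ L1) (hL2 : 0 ≤ L2) (heN : 0 ≤ eN) :
    Sm ≤ SF + 1000 * (H + L1 + L2 + eN + 1) := by
  linarith

end Stmt4Aux



open Stmt4Aux in
/-- Theorem 4: competing with all continuous prediction rules via a Banach space `𝓕`
compactly and densely embedded in `C(X)`. -/
theorem stmt4 : ∃ C : ℝ, 0 < C ∧
    ∀ (X : Type u) [MetricSpace X] [CompactSpace X]
      (𝓕 : Type v) [NormedAddCommGroup 𝓕] [NormedSpace ℝ 𝓕] [CompleteSpace 𝓕]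
      (ι : 𝓕 →ₗ[ℝ] C(X, ℝ)),
      Function.Injective ι →
      IsCompact (⇑ι '' Metric.closedBall (0 : 𝓕) 1) →
      Dense (Set.range ⇑ι) →
      ∃ σ : List (X × ℝ) → X → ℝ,
        ∀ x : ℕ → X, ∀ y : ℕ → ℝ, (∀ n, y n ∈ Set.Icc (-1 : ℝ) 1) →
          (∀ n, |preds σ x y n| ≤ 1) ∧
          ∀ N : ℕ, ∀ F : C(X, ℝ),
            ∑ n ∈ Finset.range N, (y n - preds σ x y n) ^ 2 ≤
              ∑ n ∈ Finset.range N, (y n - F (x n)) ^ 2 +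
                C * sInf ((fun ε : ℝ =>
                  metricEntropy (⇑ι '' Metric.closedBall (0 : 𝓕) 1)
                      (ε / (2 * max 1 (approach ι F ε))) +
                    Real.logb 2 (Real.logb 2 (1 / ε)) +
                    Real.logb 2 (Real.logb 2 (2 * max 1 (approach ι F ε))) +
                    ε * N + 1) '' Set.Ioc 0 (1 / 2)) := by
  classical
  refine ⟨1000, by norm_num, ?_⟩
  intro X _ _ 𝓕 _ _ _ ι hinj hcpt hdense
  set K : Set C(X, ℝ) := ⇑ι '' Metric.closedBall (0 : 𝓕) 1 with hK
  have hKne : K.Nonempty := ⟨ι 0, 0, Metric.mem_closedBall_self zero_le_one, rfl⟩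
  have hnet : ∀ j : ℕ, ∃ S : Finset C(X, ℝ), ↑S ⊆ K ∧
      S.card = coveringNumber K ((1 / 2 : ℝ) ^ j) ∧
      ∀ a ∈ K, ∃ b ∈ S, dist a b ≤ (1 / 2 : ℝ) ^ j :=
    fun j => exists_net hcpt (by positivity)
  choose Net hNsub hNcard hNcov using hnet
  have hNne : ∀ j, (Net j).Nonempty := by
    intro j
    obtain ⟨a, ha⟩ := hKne
    obtain ⟨b, hb, -⟩ := hNcov j a ha
    exact ⟨b, hb⟩
  have hNcardpos : ∀ j, (0 : ℝ) < ((Net j).card : ℝ) := by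
    intro j
    exact_mod_cast Finset.card_pos.2 (hNne j)
  -- the expert pool
  let Fib : ℕ → Type _ := fun j => {g : C(X, ℝ) // g ∈ Net j}
  let Ex : Type _ := ℕ × Σ j : ℕ, Fib j
  haveI : Nonempty Ex := ⟨(0, ⟨0, ⟨(hNne 0).choose, (hNne 0).choose_spec⟩⟩)⟩
  set f : (Σ j : ℕ, Fib j) → ℝ := fun p => w p.1 / ((Net p.1).card : ℝ) with hf
  set π : Ex → ℝ := fun e => w e.1 * f e.2 with hπdef
  set ξ : Ex → X → ℝ := fun e z => clip ((2 : ℝ) ^ e.1 * (e.2.2 : C(X, ℝ)) z) with hξdef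
  have hπ : ∀ e, 0 < π e := by
    intro e
    have := w_pos e.1
    have := w_pos e.2.1
    have := hNcardpos e.2.1
    rw [hπdef]
    positivity
  have hfpos : ∀ p, 0 < f p := by
    intro p
    have := w_pos p.1
    have := hNcardpos p.1
    rw [hf]
    positivity
  haveI hfint : ∀ j, Fintype (Fib j) := fun j => FinsetCoe.fintype _
  have hfib : ∀ j, Summable (fun g : Fib j => f ⟨j, g⟩) := fun j =>
    (hasSum_fintype _).summable
  have hfsum_eq : (fun j => ∑' g : Fib j, f ⟨j, g⟩) = w := by
    funext j
    rw [tsum_fintype]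
    simp only [hf]
    rw [Finset.sum_const, Finset.card_univ, Fintype.card_coe, nsmul_eq_mul,
      mul_div_assoc', mul_div_cancel_left₀ _ (hNcardpos j).ne']
  have hfsummable : Summable f := by
    rw [summable_sigma_of_nonneg (fun p => (hfpos p).le)]
    exact ⟨hfib, by rw [hfsum_eq]; exact summable_w⟩
  have htsumf : ∑' p, f p ≤ 3 := by
    rw [Summable.tsum_sigma' hfib hfsummable]
    calc ∑' j, ∑' g : Fib j, f ⟨j, g⟩ = ∑' j, w j := by rw [show (fun j => ∑' g : Fib j, f ⟨j, g⟩) = w from hfsum_eq]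
      _ ≤ 3 := tsum_w_le
  have hπs : Summable π := by
    have := summable_w.mul_of_nonneg hfsummable (fun m => (w_pos m).le) (fun p => (hfpos p).le)
    exact this
  have hξb : ∀ e z, |ξ e z| ≤ 1 := by
    intro e z
    rw [hξdef]
    exact abs_clip_le _
  refine ⟨strat π ξ, ?_⟩
  intro x y hy
  have hy' : ∀ n, |y n| ≤ 1 := fun n => abs_le.2 ⟨(hy n).1, (hy n).2⟩
  have hpreds : ∀ n, preds (strat π ξ) x y n = strat π ξ (hist x y n) (x n) := fun n => rfl
  constructor
  · intro n
    rw [hpreds n]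
    exact abs_strat_le hπ hπs hξb _ _
  intro N F
  -- initial weight bound
  have hW0pos : 0 < Wt π ξ [] := Wt_pos hπ hπs []
  have hW0 : Wt π ξ [] ≤ 9 := by
    have h1 : Wt π ξ [] = ∑' e, π e := by
      apply tsum_congr
      intro e
      rw [wt, eloss_nil]
      norm_num
    have h2 : ∑' e : Ex, π e = (∑' m, w m) * ∑' p, f p := by
      rw [hπdef, Summable.tsum_prod' hπs (fun k => (hfsummable.mul_left (w k)))]
      calc ∑' (k : ℕ) (p : Σ j, Fib j), w k * f p
          = ∑' (k : ℕ), w k * ∑' p, f p := by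
            apply tsum_congr
            intro k
            exact Summable.tsum_mul_left _ hfsummable
        _ = (∑' m, w m) * ∑' p, f p := by
            rw [← Summable.tsum_mul_right _ summable_w]
    have h3 : (0:ℝ) ≤ ∑' m, w m := tsum_nonneg (fun m => (w_pos m).le)
    have h4 : (0:ℝ) ≤ ∑' p, f p := tsum_nonneg (fun p => (hfpos p).le)
    rw [h1, h2]
    nlinarith [tsum_w_le, htsumf]
  have key : ∀ ε ∈ Set.Ioc (0 : ℝ) (1 / 2),
      ∑ n ∈ Finset.range N, (y n - preds (strat π ξ) x y n) ^ 2 ≤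
        ∑ n ∈ Finset.range N, (y n - F (x n)) ^ 2 +
          1000 * (metricEntropy K (ε / (2 * max 1 (approach ι F ε))) +
            Real.logb 2 (Real.logb 2 (1 / ε)) +
            Real.logb 2 (Real.logb 2 (2 * max 1 (approach ι F ε))) + ε * N + 1) := by
    rintro ε ⟨hε0, hε2⟩
    set 𝓐 : ℝ := approach ι F ε with h𝓐
    have h𝓐0 : 0 ≤ 𝓐 := by
      apply Real.sInf_nonneg
      rintro t ⟨g, -, rfl⟩
      exact norm_nonneg g
    set Av : ℝ := 2 * max 1 𝓐 with hAv
    have hmax1 : (1:ℝ) ≤ max 1 𝓐 := le_max_left _ _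
    have hmax𝓐 : 𝓐 ≤ max 1 𝓐 := le_max_right _ _
    have hA2 : 2 ≤ Av := by rw [hAv]; linarith only [hmax1]
    have hApos : (0:ℝ) < Av := by linarith only [hA2]
    -- a good approximator g in 𝓕
    have hsetne : ((fun g : 𝓕 => ‖g‖) '' {g : 𝓕 | ‖F - ι g‖ ≤ ε}).Nonempty := by
      obtain ⟨u, hub, hus⟩ := Metric.dense_iff.1 hdense F ε hε0
      obtain ⟨gg, rfl⟩ := hus
      refine ⟨‖gg‖, gg, ?_, rfl⟩
      have hd : dist F (ι gg) < ε := by rw [dist_comm]; exact Metric.mem_ball.1 hub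
      rw [Set.mem_setOf_eq, ← dist_eq_norm]
      exact hd.le
    obtain ⟨nv, ⟨g, hgmem, rfl⟩, hlt⟩ := Real.lt_sInf_add_pos hsetne one_pos
    rw [Set.mem_setOf_eq] at hgmem
    have h𝓐eq : sInf ((fun g : 𝓕 => ‖g‖) '' {g : 𝓕 | ‖F - ι g‖ ≤ ε}) = 𝓐 := rfl
    rw [h𝓐eq] at hlt
    have hgA : ‖g‖ ≤ Av := by rw [hAv]; linarith only [hlt, hmax𝓐, hmax1]
    -- logarithmic quantities
    set Q : ℝ := Real.logb 2 Av with hQ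
    set P : ℝ := Real.logb 2 (1 / ε) with hP
    have h2lt : (1:ℝ) < 2 := one_lt_two
    have hQ1 : 1 ≤ Q := by
      rw [hQ]
      rw [Real.le_logb_iff_rpow_le h2lt hApos, Real.rpow_one]
      exact hA2
    have hinve : (0:ℝ) < 1 / ε := by positivity
    have h2invε : (2:ℝ) ≤ 1 / ε := by rw [le_div_iff₀ hε0]; linarith only [hε2, hε0]
    have hP1 : 1 ≤ P := by
      rw [hP]
      rw [Real.le_logb_iff_rpow_le h2lt hinve, Real.rpow_one]
      exact h2invε
    -- the scale exponent k
    set k : ℕ := ⌈Q⌉₊ with hk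
    have hkQ : Q ≤ (k:ℝ) := Nat.le_ceil Q
    have hkQ1 : (k:ℝ) < Q + 1 := Nat.ceil_lt_add_one (by linarith only [hQ1])
    set Sc : ℝ := (2:ℝ)^k with hSc
    have hScpos : (0:ℝ) < Sc := by rw [hSc]; positivity
    have h2Q : (2:ℝ) ^ Q = Av := Real.rpow_logb (by norm_num) (by norm_num) hApos
    have hSA : Av ≤ Sc := by
      rw [hSc, ← Real.rpow_natCast 2 k, ← h2Q]
      exact Real.rpow_le_rpow_of_exponent_le (by norm_num) hkQ
    have hS2A : Sc ≤ 2 * Av := by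
      rw [hSc, ← Real.rpow_natCast 2 k]
      calc (2:ℝ) ^ (k:ℝ) ≤ 2 ^ (Q + 1) :=
            Real.rpow_le_rpow_of_exponent_le (by norm_num) hkQ1.le
        _ = 2 * Av := by
            rw [Real.rpow_add (by norm_num), h2Q, Real.rpow_one]; ring
    -- the net index j
    set j : ℕ := ⌊Q + P⌋₊ with hj
    have hjle : (j:ℝ) ≤ Q + P := Nat.floor_le (by linarith only [hP1, hQ1])
    have hjgt : Q + P < (j:ℝ) + 1 := Nat.lt_floor_add_one _
    set δ : ℝ := (1/2:ℝ)^j with hδ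
    have hδeq : δ = ((2:ℝ) ^ ((j:ℕ):ℝ))⁻¹ := by
      rw [hδ, one_div, inv_pow, Real.rpow_natCast]
    have h2P : (2:ℝ) ^ P = 1/ε := Real.rpow_logb (by norm_num) (by norm_num) hinve
    have hδpos : 0 < δ := by rw [hδ]; positivity
    have hεApos : 0 < ε / Av := by positivity
    have hδ1 : ε / Av ≤ δ := by
      have h2j : (2:ℝ)^((j:ℕ):ℝ) ≤ Av / ε := by
        calc (2:ℝ)^((j:ℕ):ℝ) ≤ 2 ^ (Q + P) :=
              Real.rpow_le_rpow_of_exponent_le (by norm_num) hjle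
          _ = Av / ε := by
              rw [Real.rpow_add (by norm_num), h2Q, h2P, mul_one_div]
      have hpow : (0:ℝ) < (2:ℝ)^((j:ℕ):ℝ) := Real.rpow_pos_of_pos (by norm_num) _
      have := one_div_le_one_div_of_le hpow h2j
      rw [one_div_div] at this
      rw [hδeq, ← one_div]
      exact this
    have hδ2 : Sc * δ ≤ 4 * ε := by
      have h2jm : Av / (2*ε) ≤ (2:ℝ)^((j:ℕ):ℝ) := by
        have heq : (2:ℝ) ^ (Q + P - 1) = Av / (2*ε) := by
          rw [show Q + P - 1 = Q + (P + (-1)) by ring, Real.rpow_add (by norm_num),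
            Real.rpow_add (by norm_num), Real.rpow_neg_one, h2Q, h2P]
          field_simp
        rw [← heq]
        exact Real.rpow_le_rpow_of_exponent_le (by norm_num) (by linarith only [hjgt])
      have hposd : (0:ℝ) < Av / (2*ε) := by positivity
      have hδub : δ ≤ 2*ε/Av := by
        have := one_div_le_one_div_of_le hposd h2jm
        rw [one_div_div] at this
        rw [hδeq, ← one_div]
        exact this
      calc Sc * δ ≤ (2*Av) * (2*ε/Av) :=
            mul_le_mul hS2A hδub hδpos.le (by linarith only [hApos])
        _ = 4 * ε := by field_simp; ring
    -- the net point
    set ν : 𝓕 := Sc⁻¹ • g with hν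
    have hνK : ι ν ∈ K := by
      refine ⟨ν, ?_, rfl⟩
      rw [Metric.mem_closedBall, dist_zero_right, hν, norm_smul, norm_inv,
        Real.norm_eq_abs, abs_of_pos hScpos]
      have hgSc : ‖g‖ ≤ Sc := le_trans hgA hSA
      calc Sc⁻¹ * ‖g‖ ≤ Sc⁻¹ * Sc :=
            mul_le_mul_of_nonneg_left hgSc (inv_nonneg.2 hScpos.le)
        _ = 1 := inv_mul_cancel₀ hScpos.ne'
    obtain ⟨G, hGmem, hGdist⟩ := hNcov j (ι ν) hνK
    set e : Ex := (k, ⟨j, ⟨G, hGmem⟩⟩) with he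
    -- pointwise approximation
    have hpt : ∀ z : X, |Sc * G z - F z| ≤ 5 * ε := by
      intro z
      have h1 : (ι ν : C(X,ℝ)) z = Sc⁻¹ * (ι g) z := by
        rw [hν, map_smul]
        rfl
      have h2 : |(ι g) z - F z| ≤ ε := by
        have h3 : ‖(F - ι g) z‖ ≤ ‖F - ι g‖ := ContinuousMap.norm_coe_le_norm _ z
        rw [ContinuousMap.sub_apply, Real.norm_eq_abs] at h3
        rw [abs_sub_comm]
        exact le_trans h3 hgmem
      have h4 : |Sc * G z - (ι g) z| ≤ 4 * ε := by
        have h5 : dist ((ι ν : C(X,ℝ)) z) (G z) ≤ dist (ι ν : C(X,ℝ)) G :=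
          ContinuousMap.dist_apply_le_dist z
        have h6 : dist ((ι ν : C(X,ℝ)) z) (G z) ≤ δ := le_trans h5 hGdist
        rw [Real.dist_eq, h1] at h6
        have h7 : Sc * G z - (ι g) z = -(Sc * (Sc⁻¹ * (ι g) z - G z)) := by
          field_simp
          ring
        rw [h7, abs_neg, abs_mul, abs_of_pos hScpos]
        calc Sc * |Sc⁻¹ * (ι g) z - G z| ≤ Sc * δ :=
              mul_le_mul_of_nonneg_left h6 hScpos.le
          _ ≤ 4 * ε := hδ2
      calc |Sc * G z - F z| ≤ |Sc * G z - (ι g) z| + |(ι g) z - F z| := abs_sub_le _ _ _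
        _ ≤ 4*ε + ε := add_le_add h4 h2
        _ = 5*ε := by ring
    -- comparison with the expert
    have hsum : ∑ n ∈ Finset.range N, (y n - ξ e (x n)) ^ 2 ≤
        ∑ n ∈ Finset.range N, (y n - F (x n)) ^ 2 + 20 * ε * N := by
      have hpern : ∀ n, (y n - ξ e (x n)) ^ 2 ≤ (y n - F (x n)) ^ 2 + 20 * ε := by
        intro n
        have h8 : ξ e (x n) = clip (Sc * G (x n)) := rfl
        rw [h8]
        have := sq_clip_le (hy' n) (hpt (x n))
        linarith only [this]
      calc ∑ n ∈ Finset.range N, (y n - ξ e (x n)) ^ 2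
          ≤ ∑ n ∈ Finset.range N, ((y n - F (x n)) ^ 2 + 20 * ε) :=
            Finset.sum_le_sum (fun n _ => hpern n)
        _ = ∑ n ∈ Finset.range N, (y n - F (x n)) ^ 2 + 20 * ε * N := by
            rw [Finset.sum_add_distrib, Finset.sum_const, Finset.card_range, nsmul_eq_mul]
            ring
    -- the regret bound
    have hreg := regret_bound hπ hπs hξb x y hy' N e
    -- bounding the prior cost
    set Cj : ℕ := (Net j).card with hCj
    set M : ℕ := coveringNumber K (ε / Av) with hM
    have hCjM : Cj ≤ M := by
      rw [hCj, hM, hNcard j]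
      exact coveringNumber_anti hcpt hεApos hδ1
    have hM1 : 1 ≤ M := by rw [hM]; exact one_le_coveringNumber hcpt hKne hεApos
    have hCj1 : 1 ≤ Cj := by rw [hCj]; exact Finset.card_pos.2 (hNne j)
    have hπe : π e = w k * (w j / (Cj:ℝ)) := rfl
    have hlog2pos : (0:ℝ) < Real.log 2 := Real.log_pos one_lt_two
    have hH : metricEntropy K (ε / Av) = Real.logb 2 (M:ℝ) := by
      rw [metricEntropy, hM]
    have hlogsplit : Real.log (Wt π ξ [] / π e) =
        Real.log (Wt π ξ []) + 2 * Real.log ((k:ℝ)+1) + 2 * Real.log ((j:ℝ)+1) +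
          Real.log (Cj:ℝ) := by
      have hCjpos : (0:ℝ) < (Cj:ℝ) := by exact_mod_cast hCj1
      rw [Real.log_div hW0pos.ne' (hπ e).ne', hπe,
        Real.log_mul (w_pos k).ne' (div_pos (w_pos j) hCjpos).ne',
        Real.log_div (w_pos j).ne' hCjpos.ne']
      have hk' := log_w_inv k
      have hj' := log_w_inv j
      rw [Real.log_inv] at hk' hj'
      linarith only [hk', hj']
    have hlogW0 : Real.log (Wt π ξ []) ≤ 8 := by
      have := Real.log_le_sub_one_of_pos hW0pos
      linarith only [this, hW0]
    have hlog2le : Real.log 2 ≤ 1 := by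
      have := Real.log_le_sub_one_of_pos (by norm_num : (0:ℝ) < 2); linarith only [this]
    have hlog3le : Real.log 3 ≤ 2 := by
      have := Real.log_le_sub_one_of_pos (by norm_num : (0:ℝ) < 3); linarith only [this]
    set LL1 : ℝ := Real.logb 2 P with hLL1
    set LL2 : ℝ := Real.logb 2 Q with hLL2
    have hLL1nn : 0 ≤ LL1 := by rw [hLL1]; exact Real.logb_nonneg h2lt hP1
    have hLL2nn : 0 ≤ LL2 := by rw [hLL2]; exact Real.logb_nonneg h2lt hQ1
    have hHnn : 0 ≤ Real.logb 2 (M:ℝ) := Real.logb_nonneg h2lt (by exact_mod_cast hM1)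
    have hlogCj : Real.log (Cj:ℝ) ≤ Real.log 2 * Real.logb 2 (M:ℝ) := by
      have h9 : Real.log (Cj:ℝ) ≤ Real.log (M:ℝ) :=
        Real.log_le_log (by exact_mod_cast hCj1) (by exact_mod_cast hCjM)
      have h10 : Real.log 2 * Real.logb 2 (M:ℝ) = Real.log (M:ℝ) := by
        rw [Real.logb]
        field_simp
      linarith only [h9, h10]
    have h14 : Real.log P = Real.log 2 * LL1 := by
      rw [hLL1, Real.logb]; field_simp
    have h15 : Real.log Q = Real.log 2 * LL2 := by
      rw [hLL2, Real.logb]; field_simp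
    have hlogj : Real.log ((j:ℝ)+1) ≤ Real.log 3 + Real.log 2 * LL1 + Real.log 2 * LL2 := by
      have h11 : (j:ℝ) + 1 ≤ 3 * P * Q := jbound hjle hP1 hQ1
      have h12 : Real.log ((j:ℝ)+1) ≤ Real.log (3 * P * Q) :=
        Real.log_le_log (by positivity) h11
      have h13 : Real.log (3*P*Q) = Real.log 3 + Real.log P + Real.log Q := by
        rw [Real.log_mul (by positivity) (by positivity),
          Real.log_mul (by norm_num) (by positivity)]
      linarith only [h12, h13, h14, h15]
    have hlogk : Real.log ((k:ℝ)+1) ≤ Real.log 3 + Real.log 2 * LL2 := by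
      have h11 : (k:ℝ) + 1 ≤ 3 * Q := by linarith only [hkQ1, hQ1]
      have h12 : Real.log ((k:ℝ)+1) ≤ Real.log (3 * Q) :=
        Real.log_le_log (by positivity) h11
      have h13 : Real.log (3*Q) = Real.log 3 + Real.log Q :=
        Real.log_mul (by norm_num) (by positivity)
      linarith only [h12, h13, h15]
    have hεN : 0 ≤ ε * (N:ℝ) := by positivity
    have hp1 : Real.log 2 * LL1 ≤ LL1 := mul_le_of_le_one_left hLL1nn hlog2le
    have hp2 : Real.log 2 * LL2 ≤ LL2 := mul_le_of_le_one_left hLL2nn hlog2le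
    have hp3 : Real.log 2 * Real.logb 2 (M:ℝ) ≤ Real.logb 2 (M:ℝ) :=
      mul_le_of_le_one_left hHnn hlog2le
    have hlj2 : Real.log ((j:ℝ)+1) ≤ 2 + LL1 + LL2 := by
      linarith only [hlogj, hlog3le, hp1, hp2]
    have hlk2 : Real.log ((k:ℝ)+1) ≤ 2 + LL2 := by
      linarith only [hlogk, hlog3le, hp2]
    have hlC2 : Real.log (Cj:ℝ) ≤ Real.logb 2 (M:ℝ) := by
      linarith only [hlogCj, hp3]
    rw [hlogsplit] at hreg
    have hsum' : ∑ n ∈ Finset.range N, (y n - ξ e (x n)) ^ 2 ≤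
        ∑ n ∈ Finset.range N, (y n - F (x n)) ^ 2 + 20 * (ε * N) := by
      linarith only [hsum]
    simp only [hpreds]
    rw [hH]
    exact assemble hreg hsum' hlogW0 hlj2 hlk2 hlC2 hHnn hLL1nn hLL2nn hεN
  -- conclude by passing to the infimum
  have hmem : (1 : ℝ) / 2 ∈ Set.Ioc (0 : ℝ) (1 / 2) := by constructor <;> norm_num
  set T : Set ℝ := (fun ε : ℝ =>
      metricEntropy K (ε / (2 * max 1 (approach ι F ε))) +
        Real.logb 2 (Real.logb 2 (1 / ε)) +
        Real.logb 2 (Real.logb 2 (2 * max 1 (approach ι F ε))) +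
        ε * N + 1) '' Set.Ioc 0 (1 / 2) with hT
  have hTne : T.Nonempty := ⟨_, ⟨1 / 2, hmem, rfl⟩⟩
  have hle : (∑ n ∈ Finset.range N, (y n - preds (strat π ξ) x y n) ^ 2 -
      ∑ n ∈ Finset.range N, (y n - F (x n)) ^ 2) / 1000 ≤ sInf T := by
    apply le_csInf hTne
    rintro b ⟨ε, hε, rfl⟩
    have := key ε hε
    linarith only [this]
  have h1000 : (0:ℝ) < 1000 := by norm_num
  have := (div_le_iff₀ h1000).1 hle
  linarith only [this]
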